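/- Let v_1, …, v_{n+1} ∈ ℤ^n be such that v_1 + ⋯ + v_{n+1} = 0 and every n of them form a ℤ-basis of ℤ^n. Then the collection of cones generated by the proper subsets of {v_1, …, v_{n+1}} forms a complete fan in ℝ^n, namely the fan of ℙ^n up to a lattice automorphism; in particular, any n of the vectors are linearly independent and the n+1 maximal cones ⟨v_1,…,v̂_i,…,v_{n+1}⟩ cover ℝ^n. -/

import Mathlib

/-- A polyhedral cone: the nonnegative hull of finitely many vectors. -/
def IsPolyhedralCone {n : ℕ} (σ : Set (Fin n → ℝ)) : Prop :=
  ∃ s : Finset (Fin n → ℝ),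
    σ = {x | ∃ c : (Fin n → ℝ) → ℝ, (∀ v, 0 ≤ c v) ∧ x = ∑ v ∈ s, c v • v}

/-- A cone is strongly convex if it contains no nonzero vector together with
its negative. -/
def StronglyConvex {n : ℕ} (σ : Set (Fin n → ℝ)) : Prop :=
  ∀ x ∈ σ, -x ∈ σ → x = 0

/-- `τ` is a face of `σ`. -/
def IsFaceOf {n : ℕ} (τ σ : Set (Fin n → ℝ)) : Prop :=
  ∃ f : (Fin n → ℝ) →ₗ[ℝ] ℝ, (∀ x ∈ σ, 0 ≤ f x) ∧ τ = {x ∈ σ | f x = 0}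

/-- A fan: a finite collection of strongly convex polyhedral cones, closed
under taking faces, such that the intersection of any two members is a face of
each. -/
def IsFan {n : ℕ} (Δ : Set (Set (Fin n → ℝ))) : Prop :=
  Δ.Finite ∧
  (∀ σ ∈ Δ, IsPolyhedralCone σ ∧ StronglyConvex σ) ∧
  (∀ σ ∈ Δ, ∀ τ, IsFaceOf τ σ → τ ∈ Δ) ∧
  (∀ σ ∈ Δ, ∀ σ' ∈ Δ, IsFaceOf (σ ∩ σ') σ ∧ IsFaceOf (σ ∩ σ') σ')


/-!
Fix an index `i`. Because `∑ u = 0`, a point `x = ∑ c_k u_k` has coordinates `c_j - c_i` in the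
basis `(u_j)_{j ≠ i}`, so two coefficient vectors representing the same point differ by a
constant. Two nonnegative representations supported on proper subsets `S ∌ i` and `T ∌ j` are
therefore equal (compare them at `i` and `j`), which gives `σ_S ∩ σ_T = σ_{S ∩ T}` and strong
convexity; a face `σ_{S'}` of `σ_S` is cut out by the sum of the coordinates indexed outside `S'`;
and subtracting the smallest coefficient puts every point in a maximal cone. Over `ℤ`, the basis
`(v_j)_{j ≠ n}` identifies the lattice with `ℤⁿ` and sends `v_n = -∑ v_j` to `-∑ e_j`.
-/

open Finset

section NonnegSpan

variable {ι V : Type*} [AddCommGroup V] [Module ℝ V]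

def nonnegSpan (u : ι → V) (S : Finset ι) : Set V :=
  {x | ∃ c : ι → ℝ, (∀ i, 0 ≤ c i) ∧ x = ∑ i ∈ S, c i • u i}

variable {u : ι → V}

theorem mem_nonnegSpan_iff [Fintype ι] {S : Finset ι} {x : V} :
    x ∈ nonnegSpan u S ↔
      ∃ c : ι → ℝ, (∀ i, 0 ≤ c i) ∧ (∀ i ∉ S, c i = 0) ∧ x = ∑ i, c i • u i := by
  classical
  constructor
  · rintro ⟨c, hc, rfl⟩
    refine ⟨fun i => if i ∈ S then c i else 0, fun i => ?_, fun i hi => if_neg hi, ?_⟩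
    · by_cases hi : i ∈ S <;> simp [hi, hc i]
    · rw [← sum_subset (subset_univ S) fun i _ hi => by simp [hi]]
      exact sum_congr rfl fun i hi => by simp [hi]
  · rintro ⟨c, hc, hcS, rfl⟩
    exact ⟨c, hc, (sum_subset (subset_univ S) fun i _ hi => by simp [hcS i hi]).symm⟩

theorem nonnegSpan_mono [Fintype ι] {S T : Finset ι} (hST : S ⊆ T) :
    nonnegSpan u S ⊆ nonnegSpan u T := by
  intro x hx
  obtain ⟨c, hc, hcS, rfl⟩ := mem_nonnegSpan_iff.1 hx
  exact mem_nonnegSpan_iff.2 ⟨c, hc, fun i hi => hcS i fun hiS => hi (hST hiS), rfl⟩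

theorem mem_nonnegSpan_of_mem {S : Finset ι} {i : ι} (hi : i ∈ S) : u i ∈ nonnegSpan u S := by
  classical
  refine ⟨Pi.single i 1, fun j => ?_, ?_⟩
  · by_cases h : j = i <;> simp [h]
  · rw [sum_eq_single_of_mem i hi fun j _ hj => by simp [hj], Pi.single_eq_same, one_smul]

theorem sep_nonnegSpan_eq_nonnegSpan_filter [Fintype ι] [DecidableEq ι] {S : Finset ι}
    {f : V →ₗ[ℝ] ℝ} (hf : ∀ x ∈ nonnegSpan u S, 0 ≤ f x) :
    {x ∈ nonnegSpan u S | f x = 0} = nonnegSpan u {i ∈ S | f (u i) = 0} := by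
  ext x
  constructor
  · rintro ⟨⟨c, hc, rfl⟩, hfx⟩
    simp only [map_sum, map_smul, smul_eq_mul] at hfx
    have hterm := (sum_eq_zero_iff_of_nonneg fun i hi =>
      mul_nonneg (hc i) (hf _ (mem_nonnegSpan_of_mem hi))).1 hfx
    refine ⟨c, hc, (sum_filter_of_ne fun i hi hne => ?_).symm⟩
    exact (mul_eq_zero.1 (hterm i hi)).resolve_left fun h => hne (by rw [h, zero_smul])
  · intro hx
    refine ⟨nonnegSpan_mono (filter_subset _ _) hx, ?_⟩
    obtain ⟨c, hc, rfl⟩ := hx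
    simp only [map_sum, map_smul, smul_eq_mul]
    exact sum_eq_zero fun i hi => by rw [(mem_filter.1 hi).2, mul_zero]

end NonnegSpan

section Circuit

variable {ι V : Type*} [Fintype ι] [DecidableEq ι] [AddCommGroup V] [Module ℝ V] {u : ι → V}
  (hu : ∑ i, u i = 0) {i : ι} {B : Module.Basis {j // j ≠ i} ℝ V} (hB : ∀ j, B j = u j)
include hu hB

theorem repr_sum_smul_of_sum_eq_zero (c : ι → ℝ) (j : {j // j ≠ i}) :
    B.repr (∑ k, c k • u k) j = c j - c i := by
  have : ∑ k, c k • u k = ∑ j : {j // j ≠ i}, (c j - c i) • B j :=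
    calc ∑ k, c k • u k = ∑ k, (c k - c i) • u k := by
          simp only [sub_smul, sum_sub_distrib, ← smul_sum, hu, smul_zero, sub_zero]
      _ = ∑ j : {j // j ≠ i}, (c j - c i) • B j := by
          rw [Fintype.sum_eq_add_sum_subtype_ne _ i, sub_self, zero_smul, zero_add]
          simp only [hB]
  rw [this, B.repr_sum_self]

theorem sub_eq_sub_of_sum_smul_eq {c d : ι → ℝ} (h : ∑ k, c k • u k = ∑ k, d k • u k) (j : ι) :
    c j - d j = c i - d i := by
  by_cases hj : j = i
  · rw [hj]
  · have := congrArg (fun x => B.repr x ⟨j, hj⟩) h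
    simp only [repr_sum_smul_of_sum_eq_zero hu hB] at this
    linarith

theorem injective_of_sum_eq_zero : Function.Injective u := by
  intro j k hjk
  by_contra hne
  have hsum : ∑ l, (Pi.single j 1 : ι → ℝ) l • u l = ∑ l, (Pi.single k 1 : ι → ℝ) l • u l := by
    simpa [Pi.single_apply] using hjk
  have hj := sub_eq_sub_of_sum_smul_eq hu hB hsum j
  have hk := sub_eq_sub_of_sum_smul_eq hu hB hsum k
  simp only [Pi.single_apply, hne, Ne.symm hne, if_true, if_false] at hj hk
  split_ifs at hj hk <;> linarith

theorem exists_mem_nonnegSpan_erase (x : V) : ∃ k, x ∈ nonnegSpan u (univ.erase k) := by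
  have hspan : Submodule.span ℝ (Set.range u) = ⊤ :=
    top_unique <| B.span_eq.symm.le.trans <| Submodule.span_mono <|
      Set.range_subset_iff.2 fun j => hB j ▸ Set.mem_range_self _
  obtain ⟨c, rfl⟩ :=
    (Submodule.mem_span_range_iff_exists_fun ℝ).1 (Submodule.eq_top_iff'.1 hspan x)
  obtain ⟨k, -, hk⟩ := exists_min_image univ c ⟨i, mem_univ i⟩
  -- the relation `∑ u = 0` lets us shift all coefficients by the minimal one
  refine ⟨k, mem_nonnegSpan_iff.2 ⟨fun l => c l - c k, fun l => sub_nonneg.2 (hk l (mem_univ l)),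
    fun l hl => by rw [show l = k by simpa using hl]; exact sub_self _, ?_⟩⟩
  simp only [sub_smul, sum_sub_distrib, ← smul_sum, hu, smul_zero, sub_zero]

theorem eq_zero_of_mem_nonnegSpan_of_neg_mem {S : Finset ι} (hiS : i ∉ S) {x : V}
    (hx : x ∈ nonnegSpan u S) (hnx : -x ∈ nonnegSpan u S) : x = 0 := by
  obtain ⟨c, hc, hcS, rfl⟩ := mem_nonnegSpan_iff.1 hx
  obtain ⟨d, hd, hdS, hcd⟩ := mem_nonnegSpan_iff.1 hnx
  have hcd' : ∑ k, c k • u k = ∑ k, (-d k) • u k := by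
    simp only [neg_smul, sum_neg_distrib, ← hcd, neg_neg]
  have hc0 : ∀ k, c k = 0 := fun k => by
    have := sub_eq_sub_of_sum_smul_eq hu hB hcd' k
    rw [hcS i hiS, hdS i hiS] at this
    linarith [hc k, hd k]
  simp [hc0]

theorem nonnegSpan_inter_nonnegSpan {S T : Finset ι} (hiS : i ∉ S) (hT : T ≠ univ) :
    nonnegSpan u S ∩ nonnegSpan u T = nonnegSpan u (S ∩ T) := by
  refine subset_antisymm ?_ (Set.subset_inter (nonnegSpan_mono inter_subset_left)
    (nonnegSpan_mono inter_subset_right))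
  rintro x ⟨hxS, hxT⟩
  obtain ⟨c, hc, hcS, rfl⟩ := mem_nonnegSpan_iff.1 hxS
  obtain ⟨d, hd, hdT, hcd⟩ := mem_nonnegSpan_iff.1 hxT
  obtain ⟨j, hjT⟩ := not_forall.1 fun h => hT (eq_univ_of_forall h)
  have hdi : d i = 0 := by
    have := sub_eq_sub_of_sum_smul_eq hu hB hcd j
    rw [hcS i hiS, hdT j hjT] at this
    linarith [hc j, hd i]
  -- both coefficient vectors vanish at `i`, so they coincide
  have hcd_eq : ∀ k, c k = d k := fun k => by
    have := sub_eq_sub_of_sum_smul_eq hu hB hcd k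
    rw [hcS i hiS, hdi] at this
    linarith
  refine mem_nonnegSpan_iff.2 ⟨c, hc, fun k hk => ?_, rfl⟩
  rcases not_and_or.1 (mt mem_inter.2 hk) with hkS | hkT
  · exact hcS k hkS
  · rw [hcd_eq, hdT k hkT]

end Circuit

section Fan

variable {ι : Type*} [Fintype ι] {n : ℕ} {u : ι → Fin n → ℝ}

theorem isPolyhedralCone_nonnegSpan (hu : Function.Injective u) (S : Finset ι) :
    IsPolyhedralCone (nonnegSpan u S) := by
  classical
  refine ⟨S.image u, Set.ext fun x => ⟨?_, ?_⟩⟩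
  · rintro ⟨c, hc, rfl⟩
    refine ⟨Function.extend u c 0, fun v => ?_, ?_⟩
    · rw [Function.extend_def]
      split_ifs
      exacts [hc _, le_rfl]
    · rw [sum_image hu.injOn]
      exact sum_congr rfl fun k _ => by rw [hu.extend_apply]
  · rintro ⟨c, hc, rfl⟩
    exact ⟨c ∘ u, fun k => hc _, sum_image hu.injOn⟩

variable [DecidableEq ι] (hu : ∑ i, u i = 0)
include hu

section Cone

variable {i : ι} {B : Module.Basis {j // j ≠ i} ℝ (Fin n → ℝ)} (hB : ∀ j, B j = u j)
include hB

theorem isFaceOf_nonnegSpan {S S' : Finset ι} (hiS : i ∉ S) (hS' : S' ⊆ S) :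
    IsFaceOf (nonnegSpan u S') (nonnegSpan u S) := by
  let f := ∑ j ∈ univ.filter (fun j : {j // j ≠ i} => ↑j ∉ S'), B.coord j
  have hf : ∀ c : ι → ℝ, c i = 0 →
      f (∑ k, c k • u k) = ∑ j ∈ univ.filter (fun j : {j // j ≠ i} => ↑j ∉ S'), c j :=
    fun c hci => by
      simp only [f, LinearMap.sum_apply, Module.Basis.coord_apply,
        repr_sum_smul_of_sum_eq_zero hu hB, hci, sub_zero]
  refine ⟨f, fun x hx => ?_, Set.ext fun x => ⟨fun hx => ?_, fun ⟨hx, hfx⟩ => ?_⟩⟩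
  · obtain ⟨c, hc, hcS, rfl⟩ := mem_nonnegSpan_iff.1 hx
    rw [hf c (hcS i hiS)]
    exact sum_nonneg fun j _ => hc j
  · refine ⟨nonnegSpan_mono hS' hx, ?_⟩
    obtain ⟨c, -, hcS', rfl⟩ := mem_nonnegSpan_iff.1 hx
    rw [hf c (hcS' i fun h => hiS (hS' h))]
    exact sum_eq_zero fun j hj => hcS' j (mem_filter.1 hj).2
  · obtain ⟨c, hc, hcS, rfl⟩ := mem_nonnegSpan_iff.1 hx
    rw [hf c (hcS i hiS)] at hfx
    have hzero := (sum_eq_zero_iff_of_nonneg fun j _ => hc _).1 hfx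
    refine mem_nonnegSpan_iff.2 ⟨c, hc, fun k hk => ?_, rfl⟩
    by_cases hki : k = i
    · rw [hki, hcS i hiS]
    · exact hzero ⟨k, hki⟩ (mem_filter.2 ⟨mem_univ _, hk⟩)

theorem sUnion_nonnegSpan_eq_univ :
    ⋃₀ {σ | ∃ S : Finset ι, S ≠ univ ∧ σ = nonnegSpan u S} = Set.univ := by
  refine Set.eq_univ_of_forall fun x => ?_
  obtain ⟨k, hk⟩ := exists_mem_nonnegSpan_erase hu hB x
  exact ⟨_, ⟨univ.erase k, (erase_ssubset (mem_univ k)).ne, rfl⟩, hk⟩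

end Cone

theorem isFan_nonnegSpan (B : ∀ i, Module.Basis {j // j ≠ i} ℝ (Fin n → ℝ))
    (hB : ∀ (i : ι) (j : {j // j ≠ i}), B i j = u j) :
    IsFan {σ | ∃ S : Finset ι, S ≠ univ ∧ σ = nonnegSpan u S} := by
  have hne : ∀ S : Finset ι, S ≠ univ → ∃ i, i ∉ S := fun S hS =>
    not_forall.1 fun h => hS (eq_univ_of_forall h)
  refine ⟨(Set.finite_range (nonnegSpan u)).subset ?_, ?_, ?_, ?_⟩
  · rintro _ ⟨S, -, rfl⟩
    exact Set.mem_range_self S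
  · rintro _ ⟨S, hS, rfl⟩
    obtain ⟨i, hiS⟩ := hne S hS
    exact ⟨isPolyhedralCone_nonnegSpan (injective_of_sum_eq_zero hu (hB i)) S,
      fun _ hx hnx => eq_zero_of_mem_nonnegSpan_of_neg_mem hu (hB i) hiS hx hnx⟩
  · rintro _ ⟨S, hS, rfl⟩ τ ⟨f, hf, rfl⟩
    exact ⟨_, fun h => hS (eq_univ_of_forall fun k => (filter_subset _ S) (h ▸ mem_univ k)),
      sep_nonnegSpan_eq_nonnegSpan_filter hf⟩
  · rintro _ ⟨S, hS, rfl⟩ _ ⟨T, hT, rfl⟩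
    obtain ⟨i, hiS⟩ := hne S hS
    obtain ⟨j, hjT⟩ := hne T hT
    rw [nonnegSpan_inter_nonnegSpan hu (hB i) hiS hT]
    exact ⟨isFaceOf_nonnegSpan hu (hB i) hiS inter_subset_left,
      isFaceOf_nonnegSpan hu (hB j) hjT inter_subset_right⟩

end Fan

theorem span_intCast_eq_top {ι κ : Type*} [Finite κ] {v : ι → κ → ℤ}
    (hv : Submodule.span ℤ (Set.range v) = ⊤) :
    Submodule.span ℝ (Set.range fun i k => (v i k : ℝ)) = ⊤ := by
  classical
  let φ := (Algebra.linearMap ℤ ℝ).compLeft κ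
  have hφ : ∀ y, φ y = fun k => (y k : ℝ) := fun y => rfl
  have hrange : (Set.range fun i k => (v i k : ℝ)) = φ '' Set.range v := by
    rw [← Set.range_comp]; rfl
  refine top_unique ?_
  rw [← (Pi.basisFun ℝ κ).span_eq, Submodule.span_le]
  rintro _ ⟨k, rfl⟩
  have hk : Pi.basisFun ℝ κ k = φ (Pi.single k 1) := by
    ext l; by_cases h : l = k <;> simp [hφ, h]
  rw [hk, hrange]
  exact Submodule.span_le_restrictScalars ℤ ℝ _
    (Submodule.apply_mem_span_image_of_mem_span φ (hv ▸ Submodule.mem_top))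

theorem exists_basis_intCast {ι : Type*} [Fintype ι] {n : ℕ} {v : ι → Fin n → ℤ}
    (hcard : Fintype.card ι = n) (hv : Submodule.span ℤ (Set.range v) = ⊤) :
    ∃ B : Module.Basis ι ℝ (Fin n → ℝ), ∀ j, B j = fun k => (v j k : ℝ) :=
  ⟨basisOfTopLeSpanOfCardEqFinrank _ (span_intCast_eq_top hv).ge (by simp [hcard]),
    fun j => by simp⟩

theorem exists_linearEquiv_castSucc_eq_single {R M : Type*} [CommRing R] [AddCommGroup M]
    [Module R M] {n : ℕ} {v : Fin (n + 1) → M} (hv : ∑ i, v i = 0)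
    (hli : LinearIndependent R fun j : {j // j ≠ Fin.last n} => v j)
    (hsp : Submodule.span R (Set.range fun j : {j // j ≠ Fin.last n} => v j) = ⊤) :
    ∃ ψ : M ≃ₗ[R] (Fin n → R), (∀ k, ψ (v k.castSucc) = Pi.single k 1) ∧
      ψ (v (Fin.last n)) = -∑ k, Pi.single k 1 := by
  let b := (Module.Basis.mk hli hsp.ge).reindex (finSuccAboveEquiv (Fin.last n)).symm
  have hb : ∀ k, b k = v k.castSucc := fun k => by
    simp [b, finSuccAboveEquiv_apply]
  have hlast : v (Fin.last n) = -∑ k, b k := by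
    rw [Fin.sum_univ_castSucc] at hv
    simp only [hb, eq_neg_of_add_eq_zero_right hv]
  have hself : ∀ k, b.equivFun (b k) = Pi.single k 1 := fun k => by
    rw [b.equivFun_apply, b.repr_self, Finsupp.single_eq_pi_single]
  refine ⟨b.equivFun, fun k => by rw [← hb, hself], ?_⟩
  simp only [hlast, map_neg, map_sum, hself]

/-- If `v 0, …, v n ∈ ℤⁿ` sum to zero and every `n` of them form a `ℤ`-basis of
`ℤⁿ`, then the cones generated by the proper subsets of `{v 0, …, v n}` form a
complete fan in `ℝⁿ` (the fan of `ℙⁿ` up to a lattice automorphism): any `n` of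
the vectors are linearly independent, the cones cover `ℝⁿ`, and a lattice
automorphism carries the `v i` to the standard generators
`e₁, …, eₙ, -e₁ - ⋯ - eₙ`. -/
theorem stmt_16 {n : ℕ} (v : Fin (n + 1) → (Fin n → ℤ))
    (hsum : ∑ i, v i = 0)
    (hbasis : ∀ i : Fin (n + 1),
      LinearIndependent ℤ (fun j : {j : Fin (n + 1) // j ≠ i} => v (j : Fin (n + 1))) ∧
      Submodule.span ℤ (Set.range (fun j : {j : Fin (n + 1) // j ≠ i} =>
        v (j : Fin (n + 1)))) = ⊤)
    (vr : Fin (n + 1) → (Fin n → ℝ)) (hvr : ∀ i j, vr i j = ((v i j : ℤ) : ℝ))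
    (Δ : Set (Set (Fin n → ℝ)))
    (hΔ : Δ = {σ | ∃ S : Finset (Fin (n + 1)), S ≠ Finset.univ ∧
      σ = {x | ∃ c : Fin (n + 1) → ℝ, (∀ i, 0 ≤ c i) ∧ x = ∑ i ∈ S, c i • vr i}})
    (w : Fin (n + 1) → (Fin n → ℤ))
    (hw : ∀ (i : Fin (n + 1)) (h : (i : ℕ) < n), w i = Pi.single (⟨i, h⟩ : Fin n) 1)
    (hwlast : w (Fin.last n) = -∑ j : Fin n, Pi.single j 1) :
    IsFan Δ ∧ ⋃₀ Δ = Set.univ ∧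
      (∀ i : Fin (n + 1), LinearIndependent ℝ
        (fun j : {j : Fin (n + 1) // j ≠ i} => vr (j : Fin (n + 1)))) ∧
      ∃ (ψ : (Fin n → ℤ) ≃ₗ[ℤ] (Fin n → ℤ)) (τ : Equiv.Perm (Fin (n + 1))),
        ∀ i, ψ (v i) = w (τ i) := by
  obtain rfl : vr = fun i k => (v i k : ℝ) := funext fun i => funext (hvr i)
  have hsumr : ∑ i, (fun k => (v i k : ℝ)) = 0 := funext fun k => by
    simpa using congr(($hsum k : ℝ))
  choose B hB using fun i => exists_basis_intCast
    (by rw [Fintype.card_congr (finSuccAboveEquiv i).symm, Fintype.card_fin]) (hbasis i).2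
  obtain ⟨ψ, hψ, hψlast⟩ := exists_linearEquiv_castSucc_eq_single hsum
    (hbasis (Fin.last n)).1 (hbasis (Fin.last n)).2
  refine ⟨hΔ ▸ isFan_nonnegSpan hsumr B hB, hΔ ▸ sUnion_nonnegSpan_eq_univ hsumr (hB 0),
    fun i => funext (hB i) ▸ (B i).linearIndependent, ψ, Equiv.refl _, fun i => ?_⟩
  induction i using Fin.lastCases with
  | last => rw [hψlast, Equiv.refl_apply, hwlast]
  | cast k => rw [hψ k, Equiv.refl_apply, hw k.castSucc (by simp)]; rfl
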